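/- arXiv:2503.12040 — 2 statements merged into one kernel-verified Lean document; each statement's English description precedes it below -/
import Mathlib

section
/- Let t be a positive integer, let λ be a strict partition, and let λλ be its doubled distinct partition. If t is not a part of λ and t is even with t/2 a part of λ, then n_t(λλ) = 2·n̂_t(λλ) + 1. If t is a part of λ and it is not the case that t is even with t/2 a part of λ, then n_t(λλ) = 2·n̂_t(λλ) − 1. In all other cases, n_t(λλ) = 2·n̂_t(λλ). -/
structure SeqPartition where
  parts : ℕ → ℕ
  antitone : ∀ ⦃i j : ℕ⦄, i ≤ j → parts j ≤ parts i
  finite_support : (Function.support parts).Finite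

namespace SeqPartition

noncomputable def size (p : SeqPartition) : ℕ := p.finite_support.toFinset.sum p.parts

noncomputable def conj (p : SeqPartition) (j : ℕ) : ℕ := Set.ncard {i : ℕ | j < p.parts i}

noncomputable def hook (p : SeqPartition) (i j : ℕ) : ℤ :=
  (p.parts i : ℤ) + (p.conj j : ℤ) - (i : ℤ) - (j : ℤ) - 1

noncomputable def nHooks (p : SeqPartition) (t : ℕ) : ℕ :=
  Set.ncard {c : ℕ × ℕ | c.2 < p.parts c.1 ∧ p.hook c.1 c.2 = (t : ℤ)}

noncomputable def nHooksAbove (p : SeqPartition) (t : ℕ) : ℕ :=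
  Set.ncard {c : ℕ × ℕ | c.2 < p.parts c.1 ∧ c.1 < c.2 ∧ p.hook c.1 c.2 = (t : ℤ)}

noncomputable def durfee (p : SeqPartition) : ℕ := Set.ncard {i : ℕ | i < p.parts i}

def IsDoubledDistinct (p : SeqPartition) : Prop :=
  ∃ (ℓ : ℕ) (μ : ℕ → ℕ),
    (∀ i < ℓ, 0 < μ i) ∧
    (∀ i j : ℕ, i < j → j < ℓ → μ j < μ i) ∧
    p.durfee = ℓ ∧
    (∀ i < ℓ, p.parts i = μ i + i + 1) ∧
    (∀ i < ℓ, p.conj i = μ i + i)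

def IsSelfConjugate (p : SeqPartition) : Prop := ∀ j, p.conj j = p.parts j

end SeqPartition

noncomputable def qPoch (a q : ℂ) (n : ℕ) : ℂ := ∏ k ∈ Finset.range n, (1 - a * q ^ k)

noncomputable def qPochInf (a q : ℂ) : ℂ := ∏' n : ℕ, (1 - a * q ^ n)

/-! The cells of `λλ` off the diagonal with hook length `t` are matched by reflecting in the
diagonal: inside the Durfee square the reflection preserves hook lengths, and a cell below the
square goes to the reflected cell shifted one column to the right, because column `j + 1` of
`λλ` has the length of row `j` for `j ≥ ℓ`. Every cell above the diagonal is hit except those in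
column `ℓ`, whose hook lengths are the parts of `λ`; the diagonal cells have hook lengths twice
the parts. Hence `n_t + #{i | μ i = t} = 2 n̂_t + #{i | 2 μ i = t}`, and both counts are at most
one since `μ` is strictly decreasing. -/

theorem Set.Finite.eq_Iio_ncard {s : Set ℕ} (hs : s.Finite) (hl : IsLowerSet s) :
    s = Set.Iio s.ncard := by
  obtain h | ⟨a, rfl⟩ := hl.eq_univ_or_Iio
  · exact absurd (h ▸ hs) Set.infinite_univ
  · rw [Set.ncard_Iio_nat]

theorem Set.ncard_setOf_lt_and_eq_of_injOn {β : Type*} [DecidableEq β] {n : ℕ} {f : ℕ → β}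
    (hf : (Set.Iio n).InjOn f) (b : β) :
    {i | i < n ∧ f i = b}.ncard = if ∃ i < n, f i = b then 1 else 0 := by
  split_ifs with h
  · obtain ⟨i, hi, rfl⟩ := h
    rw [Set.ncard_eq_one]
    exact ⟨i, Set.ext fun j => ⟨fun hj => hf hj.1 hi hj.2, by rintro rfl; exact ⟨hi, rfl⟩⟩⟩
  · rw [Set.ncard_eq_zero ((Set.finite_Iio n).subset fun i hi => hi.1)]
    exact Set.eq_empty_of_forall_notMem fun i hi => h ⟨i, hi⟩

namespace SeqPartition

variable (p : SeqPartition)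

theorem lt_conj_iff {i j : ℕ} : i < p.conj j ↔ j < p.parts i := by
  have hfin : {x | j < p.parts x}.Finite :=
    p.finite_support.subset fun x hx => Nat.ne_zero_of_lt hx
  have hlow : IsLowerSet {x | j < p.parts x} := fun _ _ hab hb => hb.trans_le (p.antitone hab)
  exact (Set.ext_iff.mp (hfin.eq_Iio_ncard hlow) i).symm

theorem lt_parts_iff_lt_durfee {i : ℕ} : i < p.parts i ↔ i < p.durfee := by
  have hfin : {x | x < p.parts x}.Finite :=
    p.finite_support.subset fun x hx => Nat.ne_zero_of_lt hx
  have hlow : IsLowerSet {x | x < p.parts x} := fun _ _ hab hb =>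
    (hab.trans_lt hb).trans_le (p.antitone hab)
  exact Set.ext_iff.mp (hfin.eq_Iio_ncard hlow) i

theorem parts_le_durfee {i : ℕ} (hi : p.durfee ≤ i) : p.parts i ≤ p.durfee :=
  (p.antitone hi).trans (not_lt.mp fun h => (p.lt_parts_iff_lt_durfee.mp h).false)

theorem conj_le_durfee {j : ℕ} (hj : p.durfee ≤ j) : p.conj j ≤ p.durfee :=
  not_lt.mp fun h => (hj.trans_lt (p.lt_conj_iff.mp h)).not_ge (p.parts_le_durfee le_rfl)

def hookCells (t : ℕ) : Set (ℕ × ℕ) := {c | c.2 < p.parts c.1 ∧ p.hook c.1 c.2 = t}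

theorem hookCells_finite (t : ℕ) : (p.hookCells t).Finite := by
  refine ((Set.finite_Iio (p.conj 0)).prod (Set.finite_Iio (p.parts 0))).subset ?_
  rintro ⟨i, j⟩ ⟨hij, -⟩
  exact ⟨p.lt_conj_iff.mpr (Nat.zero_lt_of_lt hij), hij.trans_le (p.antitone (Nat.zero_le i))⟩

theorem nHooksAbove_eq_ncard (t : ℕ) :
    p.nHooksAbove t = {c ∈ p.hookCells t | c.1 < c.2}.ncard := by
  refine congrArg Set.ncard (Set.ext fun c => ?_)
  exact ⟨fun ⟨hc, hlt, hhook⟩ => ⟨⟨hc, hhook⟩, hlt⟩, fun ⟨⟨hc, hhook⟩, hlt⟩ => ⟨hc, hlt, hhook⟩⟩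

theorem nHooks_eq_add (t : ℕ) :
    p.nHooks t = p.nHooksAbove t + {c ∈ p.hookCells t | c.1 = c.2}.ncard +
      {c ∈ p.hookCells t | c.2 < c.1}.ncard := by
  have hfin := p.hookCells_finite t
  rw [nHooksAbove_eq_ncard, ← Set.ncard_union_eq _ (hfin.sep _) (hfin.sep _),
    ← Set.ncard_union_eq _ ((hfin.sep _).union (hfin.sep _)) (hfin.sep _)]
  · refine congrArg Set.ncard (Set.ext fun c => ?_)
    simp only [Set.mem_union, Set.mem_sep_iff]
    constructor
    · intro hc
      rcases lt_trichotomy c.1 c.2 with h | h | h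
      exacts [.inl (.inl ⟨hc, h⟩), .inl (.inr ⟨hc, h⟩), .inr ⟨hc, h⟩]
    · rintro ((⟨hc, -⟩ | ⟨hc, -⟩) | ⟨hc, -⟩) <;> exact hc
  all_goals
    rw [Set.disjoint_left]
    intro c
    simp only [Set.mem_union, Set.mem_sep_iff]
    omega

/-- `p` is the doubled distinct partition `λλ` of `λ = (μ 0 > ⋯ > μ (ℓ - 1))`, with rows and
columns indexed from `0`. -/
structure IsDoubledDistinctWith (ℓ : ℕ) (μ : ℕ → ℕ) : Prop where
  pos : ∀ i < ℓ, 0 < μ i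
  strict : ∀ i j : ℕ, i < j → j < ℓ → μ j < μ i
  durfee_eq : p.durfee = ℓ
  parts_eq : ∀ i < ℓ, p.parts i = μ i + i + 1
  conj_eq : ∀ i < ℓ, p.conj i = μ i + i

def reflectShift (ℓ : ℕ) (c : ℕ × ℕ) : ℕ × ℕ := if c.1 < ℓ then c.swap else (c.2, c.1 + 1)

theorem reflectShift_injective (ℓ : ℕ) : Function.Injective (reflectShift ℓ) := by
  rintro ⟨i, j⟩ ⟨i', j'⟩ h
  simp only [reflectShift] at h
  split_ifs at h <;> simp only [Prod.swap_prod_mk, Prod.mk.injEq] at h ⊢ <;> omega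

namespace IsDoubledDistinctWith

variable {p} {ℓ : ℕ} {μ : ℕ → ℕ} {i j : ℕ}

theorem injOn_mu (h : p.IsDoubledDistinctWith ℓ μ) : (Set.Iio ℓ).InjOn μ :=
  StrictAntiOn.injOn fun i _ j hj hij => h.strict i j hij hj

theorem mu_add_le_mu_add (h : p.IsDoubledDistinctWith ℓ μ) (hij : i ≤ j) (hj : j < ℓ) :
    μ j + j ≤ μ i + i := by
  induction j, hij using Nat.le_induction with
  | base => rfl
  | succ j hij ih =>
    have := h.strict j (j + 1) j.lt_succ_self hj
    have := ih (Nat.lt_of_succ_lt hj)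
    omega

theorem durfee_le_mu_add (h : p.IsDoubledDistinctWith ℓ μ) (hi : i < ℓ) : ℓ ≤ μ i + i := by
  have := h.mu_add_le_mu_add (i := i) (j := ℓ - 1) (by omega) (by omega)
  have := h.pos (ℓ - 1) (by omega)
  omega

theorem lt_parts (h : p.IsDoubledDistinctWith ℓ μ) (hi : i < ℓ) (hj : j ≤ ℓ) : j < p.parts i := by
  have := h.durfee_le_mu_add hi
  rw [h.parts_eq i hi]
  omega

theorem parts_le (h : p.IsDoubledDistinctWith ℓ μ) (hi : ℓ ≤ i) : p.parts i ≤ ℓ := by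
  rw [← h.durfee_eq] at hi ⊢
  exact p.parts_le_durfee hi

theorem conj_le (h : p.IsDoubledDistinctWith ℓ μ) (hj : ℓ ≤ j) : p.conj j ≤ ℓ := by
  rw [← h.durfee_eq] at hj ⊢
  exact p.conj_le_durfee hj

theorem conj_durfee (h : p.IsDoubledDistinctWith ℓ μ) : p.conj ℓ = ℓ :=
  le_antisymm (h.conj_le le_rfl)
    (le_of_forall_lt fun _ hi => p.lt_conj_iff.mpr (h.lt_parts hi le_rfl))

theorem succ_lt_parts_iff (h : p.IsDoubledDistinctWith ℓ μ) (hj : j < ℓ) :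
    i + 1 < p.parts j ↔ j < p.parts i := by
  rw [h.parts_eq j hj, ← p.lt_conj_iff, h.conj_eq j hj]
  omega

theorem conj_succ (h : p.IsDoubledDistinctWith ℓ μ) (hi : ℓ ≤ i) : p.conj (i + 1) = p.parts i := by
  refine eq_of_forall_lt_iff fun r => ?_
  rw [p.lt_conj_iff]
  by_cases hr : r < ℓ
  · exact h.succ_lt_parts_iff hr
  · have := h.parts_le (not_lt.mp hr)
    have := h.parts_le hi
    omega

theorem hook_of_lt (h : p.IsDoubledDistinctWith ℓ μ) (hi : i < ℓ) (hj : j < ℓ) :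
    p.hook i j = μ i + μ j := by
  rw [hook, h.parts_eq i hi, h.conj_eq j hj]
  push_cast
  ring

theorem hook_durfee (h : p.IsDoubledDistinctWith ℓ μ) (hi : i < ℓ) : p.hook i ℓ = μ i := by
  rw [hook, h.parts_eq i hi, h.conj_durfee]
  push_cast
  ring

theorem hook_succ (h : p.IsDoubledDistinctWith ℓ μ) (hi : ℓ ≤ i) (hj : j < ℓ) :
    p.hook j (i + 1) = p.hook i j := by
  rw [hook, hook, h.conj_succ hi, h.parts_eq j hj, h.conj_eq j hj]
  push_cast
  ring

theorem swap_mem_hookCells (h : p.IsDoubledDistinctWith ℓ μ) {t : ℕ} (hi : i < ℓ) (hj : j < ℓ) :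
    (j, i) ∈ p.hookCells t ↔ (i, j) ∈ p.hookCells t := by
  change i < p.parts j ∧ p.hook j i = t ↔ j < p.parts i ∧ p.hook i j = t
  rw [h.hook_of_lt hi hj, h.hook_of_lt hj hi, add_comm]
  exact and_congr_left' (iff_of_true (h.lt_parts hj hi.le) (h.lt_parts hi hj.le))

theorem shift_mem_hookCells (h : p.IsDoubledDistinctWith ℓ μ) {t : ℕ} (hi : ℓ ≤ i) (hj : j < ℓ) :
    (j, i + 1) ∈ p.hookCells t ↔ (i, j) ∈ p.hookCells t := by
  change i + 1 < p.parts j ∧ p.hook j (i + 1) = t ↔ j < p.parts i ∧ p.hook i j = t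
  rw [h.succ_lt_parts_iff hj, h.hook_succ hi hj]

theorem bijOn_reflectShift (h : p.IsDoubledDistinctWith ℓ μ) (t : ℕ) :
    Set.BijOn (reflectShift ℓ) {c ∈ p.hookCells t | c.2 < c.1}
      ({c ∈ p.hookCells t | c.1 < c.2} \ {c | c.2 = ℓ}) := by
  refine ⟨?_, (reflectShift_injective ℓ).injOn, ?_⟩
  · rintro ⟨i, j⟩ ⟨hc, hji : j < i⟩
    by_cases hi : i < ℓ
    · rw [reflectShift, if_pos hi]
      exact ⟨⟨(h.swap_mem_hookCells hi (hji.trans hi)).mpr hc, hji⟩, hi.ne⟩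
    · have hj : j < ℓ := hc.1.trans_le (h.parts_le (not_lt.mp hi))
      rw [reflectShift, if_neg hi]
      refine ⟨⟨(h.shift_mem_hookCells (not_lt.mp hi) hj).mpr hc, by omega⟩, ?_⟩
      simp only [Set.mem_ofPred_eq]
      omega
  · rintro ⟨i, j⟩ ⟨⟨hc, hij : i < j⟩, hjℓ : j ≠ ℓ⟩
    rcases hjℓ.lt_or_gt with hj | hj
    · refine ⟨(j, i), ⟨(h.swap_mem_hookCells (hij.trans hj) hj).mpr hc, hij⟩, ?_⟩
      rw [reflectShift, if_pos hj, Prod.swap_prod_mk]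
    · have hi : i < ℓ := (p.lt_conj_iff.mpr hc.1).trans_le (h.conj_le hj.le)
      obtain ⟨k, rfl⟩ : ∃ k, j = k + 1 := ⟨j - 1, by omega⟩
      refine ⟨(k, i), ⟨(h.shift_mem_hookCells (by omega) hi).mp hc, by omega⟩, ?_⟩
      rw [reflectShift, if_neg (by omega)]

theorem ncard_diag (h : p.IsDoubledDistinctWith ℓ μ) (t : ℕ) :
    {c ∈ p.hookCells t | c.1 = c.2}.ncard = {i | i < ℓ ∧ 2 * μ i = t}.ncard := by
  have hinj : Function.Injective fun i : ℕ => (i, i) := fun _ _ e => congrArg Prod.fst e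
  rw [← Set.ncard_image_of_injective _ hinj]
  refine congrArg Set.ncard (Set.ext ?_)
  rintro ⟨i, j⟩
  constructor
  · rintro ⟨⟨hc, hhook⟩, rfl : i = j⟩
    have hi : i < ℓ := h.durfee_eq ▸ p.lt_parts_iff_lt_durfee.mp hc
    rw [h.hook_of_lt hi hi] at hhook
    exact ⟨i, ⟨hi, by omega⟩, rfl⟩
  · rintro ⟨k, ⟨hk, hkt⟩, hk'⟩
    obtain ⟨rfl, rfl⟩ := Prod.mk.inj hk'
    refine ⟨⟨h.lt_parts hk hk.le, ?_⟩, rfl⟩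
    rw [h.hook_of_lt hk hk]
    omega

theorem ncard_col (h : p.IsDoubledDistinctWith ℓ μ) (t : ℕ) :
    ({c ∈ p.hookCells t | c.1 < c.2} ∩ {c | c.2 = ℓ}).ncard = {i | i < ℓ ∧ μ i = t}.ncard := by
  have hinj : Function.Injective fun i : ℕ => (i, ℓ) := fun _ _ e => congrArg Prod.fst e
  rw [← Set.ncard_image_of_injective _ hinj]
  refine congrArg Set.ncard (Set.ext ?_)
  rintro ⟨i, j⟩
  constructor
  · rintro ⟨⟨⟨hc, hhook⟩, hij : i < j⟩, rfl : j = ℓ⟩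
    rw [h.hook_durfee hij] at hhook
    exact ⟨i, ⟨hij, by omega⟩, rfl⟩
  · rintro ⟨k, ⟨hk, hkt⟩, hk'⟩
    obtain ⟨rfl, rfl⟩ := Prod.mk.inj hk'
    refine ⟨⟨⟨h.lt_parts hk le_rfl, ?_⟩, hk⟩, rfl⟩
    rw [h.hook_durfee hk]
    omega

theorem nHooks_add_ite (h : p.IsDoubledDistinctWith ℓ μ) (t : ℕ) :
    p.nHooks t + (if ∃ i < ℓ, μ i = t then 1 else 0) =
      2 * p.nHooksAbove t + (if ∃ i < ℓ, 2 * μ i = t then 1 else 0) := by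
  have hinj₂ : (Set.Iio ℓ).InjOn fun i => 2 * μ i := fun i hi j hj e =>
    h.injOn_mu hi hj (Nat.eq_of_mul_eq_mul_left two_pos e)
  have habove := Set.ncard_inter_add_ncard_sdiff_eq_ncard {c ∈ p.hookCells t | c.1 < c.2}
    {c | c.2 = ℓ} ((p.hookCells_finite t).sep _)
  rw [h.ncard_col, ← (h.bijOn_reflectShift t).ncard_eq, ← p.nHooksAbove_eq_ncard] at habove
  rw [p.nHooks_eq_add, h.ncard_diag, ← Set.ncard_setOf_lt_and_eq_of_injOn h.injOn_mu,
    ← Set.ncard_setOf_lt_and_eq_of_injOn hinj₂]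
  omega

end IsDoubledDistinctWith

end SeqPartition

theorem doubled_distinct_hook_diagonal_relation_general
    (t : ℕ) (ℓ : ℕ) (μ : ℕ → ℕ)
    (hpos : ∀ i < ℓ, 0 < μ i)
    (hstrict : ∀ i j : ℕ, i < j → j < ℓ → μ j < μ i)
    (p : SeqPartition)
    (hdurfee : p.durfee = ℓ)
    (hparts : ∀ i < ℓ, p.parts i = μ i + i + 1)
    (hconj : ∀ i < ℓ, p.conj i = μ i + i) :
    ((¬ (∃ i < ℓ, μ i = t)) ∧ (Even t ∧ ∃ i < ℓ, 2 * μ i = t) →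
        p.nHooks t = 2 * p.nHooksAbove t + 1) ∧
    ((∃ i < ℓ, μ i = t) ∧ ¬ (Even t ∧ ∃ i < ℓ, 2 * μ i = t) →
        p.nHooks t + 1 = 2 * p.nHooksAbove t) ∧
    (¬ ((¬ (∃ i < ℓ, μ i = t)) ∧ (Even t ∧ ∃ i < ℓ, 2 * μ i = t)) ∧
      ¬ ((∃ i < ℓ, μ i = t) ∧ ¬ (Even t ∧ ∃ i < ℓ, 2 * μ i = t)) →
        p.nHooks t = 2 * p.nHooksAbove t) := by
  have key :=
    (SeqPartition.IsDoubledDistinctWith.mk hpos hstrict hdurfee hparts hconj).nHooks_add_ite t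
  have hEven : (Even t ∧ ∃ i < ℓ, 2 * μ i = t) ↔ ∃ i < ℓ, 2 * μ i = t :=
    and_iff_right_of_imp fun ⟨i, _, hi⟩ => ⟨μ i, by omega⟩
  rw [hEven]
  refine ⟨fun ⟨hcol, hdiag⟩ => ?_, fun ⟨hcol, hdiag⟩ => ?_, fun ⟨hne₁, hne₂⟩ => ?_⟩
  · rw [if_neg hcol, if_pos hdiag] at key
    omega
  · rw [if_pos hcol, if_neg hdiag] at key
    omega
  · split_ifs at key with hcol hdiag hdiag
    · omega
    · exact absurd ⟨hcol, hdiag⟩ hne₂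
    · exact absurd ⟨hcol, hdiag⟩ hne₁
    · omega

theorem doubled_distinct_hook_diagonal_relation
    (t : ℕ) (ht0 : 0 < t) (ℓ : ℕ) (μ : ℕ → ℕ)
    (hpos : ∀ i < ℓ, 0 < μ i)
    (hstrict : ∀ i j : ℕ, i < j → j < ℓ → μ j < μ i)
    (p : SeqPartition)
    (hdurfee : p.durfee = ℓ)
    (hparts : ∀ i < ℓ, p.parts i = μ i + i + 1)
    (hconj : ∀ i < ℓ, p.conj i = μ i + i) :
    ((¬ (∃ i < ℓ, μ i = t)) ∧ (Even t ∧ ∃ i < ℓ, 2 * μ i = t) →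
        p.nHooks t = 2 * p.nHooksAbove t + 1) ∧
    ((∃ i < ℓ, μ i = t) ∧ ¬ (Even t ∧ ∃ i < ℓ, 2 * μ i = t) →
        p.nHooks t + 1 = 2 * p.nHooksAbove t) ∧
    (¬ ((¬ (∃ i < ℓ, μ i = t)) ∧ (Even t ∧ ∃ i < ℓ, 2 * μ i = t)) ∧
      ¬ ((∃ i < ℓ, μ i = t) ∧ ¬ (Even t ∧ ∃ i < ℓ, 2 * μ i = t)) →
        p.nHooks t = 2 * p.nHooksAbove t) :=
  doubled_distinct_hook_diagonal_relation_general t ℓ μ hpos hstrict p hdurfee hparts hconj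
end

section
/- For every X ∈ ℂ and every q ∈ ℂ with |q| < 1, the series ∑_{n≥0} q^{n(n+1)/2}·(X;q)_n/(q;q)_n converges absolutely and equals (Xq;q²)_∞·(−q;q)_∞. -/
/-!
Write `F(X) = ∑ uₙ(X)` for the series and `G(t) = ∑ q^{n(n-1)/2} tⁿ / (q;q)ₙ` for Euler's
series. Comparing the terms of `F(X)`, `F(Xq)` and `F(Xq²)` gives
`F(X) - F(Xq) = (1 - Xq) F(Xq²) - F(Xq)`, since both sides equal `-X ∑ q^{n+1} uₙ(Xq)`;
hence `F(X) = (1 - Xq) F(Xq²)`. Likewise `G(t) = (1 + t) G(tq)`. Iterating such a functional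
equation and letting the argument tend to `0`, where the series are continuous, gives
`F(X) = (Xq;q²)_∞ F(0)` and `G(t) = (-t;q)_∞ G(0) = (-t;q)_∞`, and `F(0) = G(q)`.
-/

open Filter Topology

lemma Nat.choose_two_succ (n : ℕ) : (n + 1).choose 2 = n.choose 2 + n := by
  rw [Nat.choose_succ_succ' n 1, Nat.choose_one_right, add_comm]

lemma Nat.mul_succ_div_two_eq_choose_two (n : ℕ) : n * (n + 1) / 2 = (n + 1).choose 2 := by
  rw [Nat.choose_two_right, Nat.add_sub_cancel, mul_comm]

lemma summable_pow_choose_two_mul_pow {r : ℝ} (hr0 : 0 ≤ r) (hr : r < 1) (c : ℝ) :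
    Summable fun n : ℕ => r ^ n.choose 2 * c ^ n := by
  refine summable_of_ratio_norm_eventually_le (r := 1 / 2) (by norm_num) ?_
  have h0 : Tendsto (fun n : ℕ => r ^ n * ‖c‖) atTop (𝓝 0) := by
    simpa using (tendsto_pow_atTop_nhds_zero_of_lt_one hr0 hr).mul_const ‖c‖
  filter_upwards [h0.eventually_le_const (by norm_num : (0 : ℝ) < 1 / 2)] with n hn
  calc ‖r ^ (n + 1).choose 2 * c ^ (n + 1)‖ = r ^ n * ‖c‖ * ‖r ^ n.choose 2 * c ^ n‖ := by
        simp only [Nat.choose_two_succ, norm_mul, norm_pow, Real.norm_of_nonneg hr0, pow_add,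
          pow_succ]
        ring
    _ ≤ 1 / 2 * ‖r ^ n.choose 2 * c ^ n‖ := by gcongr

lemma qPoch_zero (a q : ℂ) : qPoch a q 0 = 1 := Finset.prod_range_zero _

lemma qPoch_succ (a q : ℂ) (n : ℕ) : qPoch a q (n + 1) = qPoch a q n * (1 - a * q ^ n) :=
  Finset.prod_range_succ _ _

lemma qPoch_succ' (a q : ℂ) (n : ℕ) : qPoch a q (n + 1) = (1 - a) * qPoch (a * q) q n := by
  simp only [qPoch, Finset.prod_range_succ', pow_zero, mul_one, pow_succ', ← mul_assoc]
  exact mul_comm _ _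

lemma qPoch_zero_left (q : ℂ) (n : ℕ) : qPoch 0 q n = 1 := by
  simp [qPoch]

section qPoch

variable {a q : ℂ}

lemma norm_qPoch_le (hq : ‖q‖ ≤ 1) (n : ℕ) : ‖qPoch a q n‖ ≤ (1 + ‖a‖) ^ n := by
  rw [qPoch, norm_prod, show (1 + ‖a‖) ^ n = ∏ _k ∈ Finset.range n, (1 + ‖a‖) by simp]
  gcongr with k
  calc ‖1 - a * q ^ k‖ ≤ ‖(1 : ℂ)‖ + ‖a‖ * ‖q‖ ^ k := by
        simpa only [norm_mul, norm_pow] using norm_sub_le (1 : ℂ) (a * q ^ k)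
    _ ≤ 1 + ‖a‖ * 1 := by
        rw [norm_one]; gcongr; exact pow_le_one₀ (norm_nonneg q) hq
    _ = 1 + ‖a‖ := by rw [mul_one]

lemma one_sub_norm_pow_le_norm_qPoch (ha : ‖a‖ ≤ 1) (hq : ‖q‖ ≤ 1) (n : ℕ) :
    (1 - ‖a‖) ^ n ≤ ‖qPoch a q n‖ := by
  rw [qPoch, norm_prod, show (1 - ‖a‖) ^ n = ∏ _k ∈ Finset.range n, (1 - ‖a‖) by simp]
  refine Finset.prod_le_prod (fun _ _ => sub_nonneg.2 ha) fun k _ => ?_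
  calc 1 - ‖a‖ ≤ 1 - ‖a‖ * ‖q‖ ^ k := by
        gcongr; exact mul_le_of_le_one_right (norm_nonneg a) (pow_le_one₀ (norm_nonneg q) hq)
    _ ≤ ‖1 - a * q ^ k‖ := by
        simpa only [norm_one, norm_mul, norm_pow] using norm_sub_norm_le (1 : ℂ) (a * q ^ k)

lemma qPoch_ne_zero (ha : ‖a‖ < 1) (hq : ‖q‖ ≤ 1) (n : ℕ) : qPoch a q n ≠ 0 :=
  norm_pos_iff.1 <| (pow_pos (sub_pos.2 ha) n).trans_le
    (one_sub_norm_pow_le_norm_qPoch ha.le hq n)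

lemma norm_div_qPoch_le (hq : ‖q‖ < 1) (z : ℂ) (n : ℕ) :
    ‖z / qPoch q q n‖ ≤ ‖z‖ / (1 - ‖q‖) ^ n := by
  rw [norm_div]
  exact div_le_div_of_nonneg_left (norm_nonneg z) (pow_pos (sub_pos.2 hq) n)
    (one_sub_norm_pow_le_norm_qPoch hq.le hq.le n)

lemma tendsto_qPoch_qPochInf (hq : ‖q‖ < 1) :
    Tendsto (qPoch a q) atTop (𝓝 (qPochInf a q)) := by
  have hsum : Summable fun k : ℕ => ‖-(a * q ^ k)‖ := by
    simpa [norm_mul, norm_pow] using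
      (summable_geometric_of_lt_one (norm_nonneg q) hq).mul_left ‖a‖
  have := (multipliable_one_add_of_summable hsum).hasProd.tendsto_prod_nat
  simp only [← sub_eq_add_neg] at this
  exact this

end qPoch

theorem eq_qPochInf_mul_of_eq_mul_comp {f : ℂ → ℂ} {c p : ℂ} (hp : ‖p‖ < 1)
    (hf : ContinuousAt f 0) (hfe : ∀ x, f x = (1 - x * c) * f (x * p)) (x : ℂ) :
    f x = qPochInf (x * c) p * f 0 := by
  have hiter : ∀ N, f x = qPoch (x * c) p N * f (x * p ^ N) := by
    intro N
    induction N with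
    | zero => simp [qPoch_zero]
    | succ N ih =>
      rw [ih, hfe (x * p ^ N), qPoch_succ, show x * p ^ N * p = x * p ^ (N + 1) by ring]
      ring
  have hlim : Tendsto (fun N => qPoch (x * c) p N * f (x * p ^ N)) atTop
      (𝓝 (qPochInf (x * c) p * f 0)) := by
    refine (tendsto_qPoch_qPochInf hp).mul (hf.tendsto.comp ?_)
    simpa using (tendsto_pow_atTop_nhds_zero_of_norm_lt_one hp).const_mul x
  exact tendsto_nhds_unique (tendsto_const_nhds.congr hiter) hlim

noncomputable def rogersFineTerm (q X : ℂ) (n : ℕ) : ℂ :=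
  q ^ (n + 1).choose 2 * qPoch X q n / qPoch q q n

noncomputable def rogersFineSeries (q X : ℂ) : ℂ := ∑' n, rogersFineTerm q X n

noncomputable def eulerTerm (q t : ℂ) (n : ℕ) : ℂ := q ^ n.choose 2 * t ^ n / qPoch q q n

noncomputable def eulerSeries (q t : ℂ) : ℂ := ∑' n, eulerTerm q t n

lemma rogersFineTerm_zero (q X : ℂ) : rogersFineTerm q X 0 = 1 := by
  simp [rogersFineTerm, qPoch_zero]

lemma eulerTerm_zero (q t : ℂ) : eulerTerm q t 0 = 1 := by
  simp [eulerTerm, qPoch_zero]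

lemma eulerSeries_zero (q : ℂ) : eulerSeries q 0 = 1 := by
  rw [eulerSeries, tsum_eq_single 0 fun n hn => by simp [eulerTerm, hn]]
  simp [eulerTerm, qPoch_zero]

lemma rogersFineSeries_zero (q : ℂ) : rogersFineSeries q 0 = eulerSeries q q := by
  refine tsum_congr fun n => ?_
  rw [rogersFineTerm, eulerTerm, qPoch_zero_left, Nat.choose_two_succ, pow_add, mul_one]

section Series

variable {q : ℂ}

lemma norm_rogersFineTerm_le (hq : ‖q‖ < 1) {X : ℂ} {R : ℝ} (hX : ‖X‖ ≤ R) (n : ℕ) :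
    ‖rogersFineTerm q X n‖ ≤ ‖q‖ ^ n.choose 2 * ((1 + R) / (1 - ‖q‖)) ^ n := by
  calc ‖rogersFineTerm q X n‖ ≤ ‖q ^ (n + 1).choose 2 * qPoch X q n‖ / (1 - ‖q‖) ^ n :=
        norm_div_qPoch_le hq _ n
    _ ≤ ‖q‖ ^ n.choose 2 * (1 + R) ^ n / (1 - ‖q‖) ^ n := by
        rw [norm_mul, norm_pow]
        have hpow : ‖q‖ ^ (n + 1).choose 2 ≤ ‖q‖ ^ n.choose 2 :=
          pow_le_pow_of_le_one (norm_nonneg q) hq.le (by simp [Nat.choose_two_succ])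
        have hpoch : ‖qPoch X q n‖ ≤ (1 + R) ^ n :=
          (norm_qPoch_le hq.le n).trans (by gcongr)
        gcongr
    _ = ‖q‖ ^ n.choose 2 * ((1 + R) / (1 - ‖q‖)) ^ n := by rw [div_pow, mul_div_assoc]

lemma norm_eulerTerm_le (hq : ‖q‖ < 1) {t : ℂ} {R : ℝ} (ht : ‖t‖ ≤ R) (n : ℕ) :
    ‖eulerTerm q t n‖ ≤ ‖q‖ ^ n.choose 2 * (R / (1 - ‖q‖)) ^ n := by
  calc ‖eulerTerm q t n‖ ≤ ‖q ^ n.choose 2 * t ^ n‖ / (1 - ‖q‖) ^ n := norm_div_qPoch_le hq _ n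
    _ ≤ ‖q‖ ^ n.choose 2 * R ^ n / (1 - ‖q‖) ^ n := by
        rw [norm_mul, norm_pow, norm_pow]
        gcongr
    _ = ‖q‖ ^ n.choose 2 * (R / (1 - ‖q‖)) ^ n := by rw [div_pow, mul_div_assoc]

lemma summable_norm_rogersFineTerm (hq : ‖q‖ < 1) (X : ℂ) :
    Summable fun n => ‖rogersFineTerm q X n‖ :=
  .of_nonneg_of_le (fun _ => norm_nonneg _) (norm_rogersFineTerm_le hq le_rfl)
    (summable_pow_choose_two_mul_pow (norm_nonneg q) hq _)

lemma summable_eulerTerm (hq : ‖q‖ < 1) (t : ℂ) : Summable (eulerTerm q t) :=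
  Summable.of_norm <| .of_nonneg_of_le (fun _ => norm_nonneg _) (norm_eulerTerm_le hq le_rfl)
    (summable_pow_choose_two_mul_pow (norm_nonneg q) hq _)

lemma continuousAt_rogersFineSeries (hq : ‖q‖ < 1) : ContinuousAt (rogersFineSeries q) 0 := by
  refine (continuousOn_tsum (fun n => Continuous.continuousOn ?_)
    (summable_pow_choose_two_mul_pow (norm_nonneg q) hq _)
    (fun n X hX => norm_rogersFineTerm_le hq (mem_closedBall_zero_iff.1 hX) n)).continuousAt
    (Metric.closedBall_mem_nhds 0 one_pos)
  unfold rogersFineTerm qPoch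
  fun_prop

lemma continuousAt_eulerSeries (hq : ‖q‖ < 1) : ContinuousAt (eulerSeries q) 0 := by
  refine (continuousOn_tsum (fun n => Continuous.continuousOn ?_)
    (summable_pow_choose_two_mul_pow (norm_nonneg q) hq _)
    (fun n t ht => norm_eulerTerm_le hq (mem_closedBall_zero_iff.1 ht) n)).continuousAt
    (Metric.closedBall_mem_nhds 0 one_pos)
  unfold eulerTerm
  fun_prop

lemma rogersFineTerm_succ_sub (hq : ‖q‖ < 1) (X : ℂ) (n : ℕ) :
    rogersFineTerm q X (n + 1) - rogersFineTerm q (X * q) (n + 1) =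
      -(X * q ^ (n + 1)) * rogersFineTerm q (X * q) n := by
  have hQ := qPoch_ne_zero hq hq.le n
  have hQ' : 1 - q * q ^ n ≠ 0 := by
    simpa [qPoch_succ, hQ] using qPoch_ne_zero hq hq.le (n + 1)
  simp only [rogersFineTerm]
  rw [qPoch_succ' X, qPoch_succ (X * q), qPoch_succ q, Nat.choose_two_succ (n + 1)]
  field_simp
  ring

lemma one_sub_mul_rogersFineTerm_sub (X : ℂ) (n : ℕ) :
    (1 - X * q) * rogersFineTerm q (X * q ^ 2) n - rogersFineTerm q (X * q) n =
      -(X * q ^ (n + 1)) * rogersFineTerm q (X * q) n := by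
  have h := (qPoch_succ' (X * q) q n).symm.trans (qPoch_succ (X * q) q n)
  rw [mul_assoc, ← sq] at h
  simp only [rogersFineTerm]
  linear_combination (q ^ (n + 1).choose 2 / qPoch q q n) * h

lemma rogersFineSeries_eq (hq : ‖q‖ < 1) (X : ℂ) :
    rogersFineSeries q X = (1 - X * q) * rogersFineSeries q (X * q ^ 2) := by
  have hs : ∀ Y, HasSum (rogersFineTerm q Y) (rogersFineSeries q Y) := fun Y =>
    (summable_norm_rogersFineTerm hq Y).of_norm.hasSum
  have h1 : HasSum (fun n => -(X * q ^ (n + 1)) * rogersFineTerm q (X * q) n)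
      (rogersFineSeries q X - rogersFineSeries q (X * q)) := by
    have h := (hs X).sub (hs (X * q))
    rw [← hasSum_nat_add_iff' 1, Finset.sum_range_one, rogersFineTerm_zero, rogersFineTerm_zero,
      sub_self, sub_zero] at h
    exact h.congr_fun fun n => (rogersFineTerm_succ_sub hq X n).symm
  have h2 : HasSum (fun n => -(X * q ^ (n + 1)) * rogersFineTerm q (X * q) n)
      ((1 - X * q) * rogersFineSeries q (X * q ^ 2) - rogersFineSeries q (X * q)) :=
    (((hs _).mul_left _).sub (hs _)).congr_fun fun n =>
      (one_sub_mul_rogersFineTerm_sub X n).symm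
  linear_combination h1.unique h2

lemma eulerTerm_succ_sub (hq : ‖q‖ < 1) (t : ℂ) (n : ℕ) :
    eulerTerm q t (n + 1) - eulerTerm q (t * q) (n + 1) = t * eulerTerm q (t * q) n := by
  have hQ := qPoch_ne_zero hq hq.le n
  have hQ' : 1 - q * q ^ n ≠ 0 := by
    simpa [qPoch_succ, hQ] using qPoch_ne_zero hq hq.le (n + 1)
  simp only [eulerTerm]
  rw [qPoch_succ q, Nat.choose_two_succ]
  field_simp
  ring

lemma eulerSeries_eq (hq : ‖q‖ < 1) (t : ℂ) :
    eulerSeries q t = (1 + t) * eulerSeries q (t * q) := by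
  have hs : ∀ s, HasSum (eulerTerm q s) (eulerSeries q s) := fun s =>
    (summable_eulerTerm hq s).hasSum
  have h := (hs t).sub (hs (t * q))
  rw [← hasSum_nat_add_iff' 1, Finset.sum_range_one, eulerTerm_zero, eulerTerm_zero,
    sub_self, sub_zero] at h
  have h1 := h.congr_fun fun n => (eulerTerm_succ_sub hq t n).symm
  linear_combination h1.unique ((hs (t * q)).mul_left t)

end Series

theorem rogers_fine_type_identity (X q : ℂ) (hq : ‖q‖ < 1) :
    Summable (fun n : ℕ => ‖q ^ (n * (n + 1) / 2) * qPoch X q n / qPoch q q n‖) ∧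
    (∑' n : ℕ, q ^ (n * (n + 1) / 2) * qPoch X q n / qPoch q q n) =
      qPochInf (X * q) (q ^ 2) * qPochInf (-q) q := by
  simp only [Nat.mul_succ_div_two_eq_choose_two]
  refine ⟨summable_norm_rogersFineTerm hq X, ?_⟩
  have hq2 : ‖q ^ 2‖ < 1 := by
    rw [norm_pow]; exact pow_lt_one₀ (norm_nonneg q) hq two_ne_zero
  have hF := eq_qPochInf_mul_of_eq_mul_comp hq2 (continuousAt_rogersFineSeries hq)
    (rogersFineSeries_eq hq) X
  have hG := eq_qPochInf_mul_of_eq_mul_comp (c := -1) hq (continuousAt_eulerSeries hq)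
    (fun t => by rw [eulerSeries_eq hq t]; ring) q
  rw [rogersFineSeries_zero, hG, eulerSeries_zero, mul_neg_one, mul_one] at hF
  exact hF
end
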